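/- Two words u and v over the same ordered alphabet are conjugate if and only if their Burrows-Wheeler transforms are equal. -/

import Mathlib

namespace BWTpaper

variable {A : Type*}

/-- Lexicographic `≤` (as a `Bool`) on lists, induced by a strict order `lt` on letters. -/
def lexLe (lt : A → A → Bool) : List A → List A → Bool
  | [], _ => true
  | _ :: _, [] => false
  | x :: xs, y :: ys => if lt x y then true else if lt y x then false else lexLe lt xs ys

/-- The list of all rotations (conjugates, with multiplicity) of a word. -/
def rotations (w : List A) : List (List A) := (List.range w.length).map (fun i => w.rotate i)

/-- Burrows-Wheeler transform with respect to a strict order `lt` on letters. -/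
def bwtBy (lt : A → A → Bool) (w : List A) : List A :=
  ((rotations w).mergeSort (lexLe lt)).filterMap List.getLast?

def stdLt [LinearOrder A] : A → A → Bool := fun x y => decide (x < y)

/-- Burrows-Wheeler transform w.r.t. the order of a `LinearOrder` alphabet. -/
def bwt [LinearOrder A] (w : List A) : List A := bwtBy stdLt w

def Conjugate (u v : List A) : Prop := ∃ x y : List A, u = x ++ y ∧ v = y ++ x

/-- `u^p`. -/
def wordPow (u : List A) (p : ℕ) : List A := (List.replicate p u).flatten

def Primitive (w : List A) : Prop := w ≠ [] ∧ ∀ (u : List A) (k : ℕ), w = wordPow u k → k = 1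

/-- The letters of the alphabet, sorted increasingly w.r.t. `lt`. -/
noncomputable def sortedAlphabet [Fintype A] (lt : A → A → Bool) : List A :=
  Finset.univ.toList.mergeSort (fun x y => !(lt y x))

/-- `w` is `π`-clustering w.r.t. the letter order `lt`:
its BWT is `π(a₁)^{k₁} ⋯ π(a_d)^{k_d}` where `a₁ < ⋯ < a_d` and `k_i = |w|_{π(a_i)}`. -/
def IsClusteringBy [Fintype A] [DecidableEq A] (lt : A → A → Bool) (π : Equiv.Perm A)
    (w : List A) : Prop :=
  bwtBy lt w = (sortedAlphabet lt).flatMap (fun c => List.replicate (w.count (π c)) (π c))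

def IsClustering [Fintype A] [LinearOrder A] (π : Equiv.Perm A) (w : List A) : Prop :=
  IsClusteringBy stdLt π w

/-- The prefix of length `n` of the periodic infinite word `u^ω`. -/
def omegaTake (u : List A) (n : ℕ) : List A := ((List.replicate n u).flatten).take n

/-- The ω-order: `u ≤_ω v` iff `u^ω ≤ v^ω` lexicographically (decided on the first
`|u| + |v|` letters, which suffices by Fine and Wilf). -/
def omegaLe (lt : A → A → Bool) (u v : List A) : Bool :=
  lexLe lt (omegaTake u (u.length + v.length)) (omegaTake v (u.length + v.length))

/-- Extended Burrows-Wheeler transform of a multiset (list) of words. -/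
def ebwtBy (lt : A → A → Bool) (W : List (List A)) : List A :=
  ((W.flatMap rotations).mergeSort (omegaLe lt)).filterMap List.getLast?

/-- A multiset of words is `π`-clustering if its eBWT consists of the blocks
`π(a₁)^{k₁} ⋯ π(a_d)^{k_d}` with `k_i` the total number of occurrences of `π(a_i)`. -/
def IsClusteringMultisetBy [Fintype A] [DecidableEq A] (lt : A → A → Bool)
    (π : Equiv.Perm A) (W : List (List A)) : Prop :=
  ebwtBy lt W =
    (sortedAlphabet lt).flatMap
      (fun c => List.replicate ((W.map (fun w => w.count (π c))).sum) (π c))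

/-- The morphism `α_{a,b} : a ↦ ab`, `c ↦ c` for `c ≠ a`. -/
def alphaM [DecidableEq A] (a b : A) (w : List A) : List A :=
  w.flatMap (fun c => if c = a then [a, b] else [c])

/-- The morphism `α̃_{a,b} : a ↦ ba`, `c ↦ c` for `c ≠ a`. -/
def tildeM [DecidableEq A] (a b : A) (w : List A) : List A :=
  w.flatMap (fun c => if c = a then [b, a] else [c])

/-!
Conjugate words have the same multiset of rotations, hence the same sorted matrix `M` of
rotations, whose last column is the BWT. Conversely the BWT determines `M`: rotating every row
of `M` right by one permutes its rows, so the first `k + 1` columns of `M` are obtained by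
sorting the words `(last letter) :: (first k letters)` of the rows. Iterating `|w|` times
recovers `M`, and `u` is a row of `M(u) = M(v)`, i.e. a rotation of `v`.
-/

section ListOrder

variable [LinearOrder A]

theorem lexLe_stdLt_iff : ∀ a b : List A, lexLe stdLt a b = true ↔ a ≤ b
  | [], b => by simp [lexLe, ← not_lt]
  | _ :: _, [] => by simp [lexLe, ← not_lt]
  | x :: xs, y :: ys => by
    have ih := lexLe_stdLt_iff xs ys
    rw [← not_lt] at ih ⊢
    rw [List.cons_lt_cons_iff]
    simp only [lexLe, stdLt]
    rcases lt_trichotomy x y with h | rfl | h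
    · simp [h, asymm h, h.ne']
    · simpa using ih
    · simp [h, asymm h]

theorem lexLe_stdLt : lexLe (stdLt : A → A → Bool) = fun a b => decide (a ≤ b) := by
  funext a b
  exact Bool.eq_iff_iff.2 ((lexLe_stdLt_iff a b).trans decide_eq_true_iff.symm)

theorem monotone_take (k : ℕ) : Monotone (List.take k : List A → List A) := by
  induction k with
  | zero => intro a b _; simp
  | succ k ih =>
    rintro (_ | ⟨x, xs⟩) (_ | ⟨y, ys⟩) h
    · simp
    · simp [← not_lt]
    · simp [← not_lt] at h
    · simp only [List.take_succ_cons, ← not_lt, List.cons_lt_cons_iff, not_or, not_and] at h ⊢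
      exact ⟨h.1, fun hyx => not_lt.2 (ih (not_lt.1 (h.2 hyx)))⟩

end ListOrder

theorem mergeSort_eq_of_perm_of_sortedLE {β : Type*} [LinearOrder β] {l l' : List β}
    (hp : l.Perm l') (hs : l'.SortedLE) : l.mergeSort (· ≤ ·) = l' :=
  ((List.mergeSort_perm l _).trans hp).eq_of_sortedLE List.sortedLE_mergeSort hs

theorem conjugate_iff_isRotated {u v : List A} : Conjugate u v ↔ u ~r v := by
  constructor
  · rintro ⟨x, y, rfl, rfl⟩
    exact List.isRotated_append
  · intro h
    obtain ⟨n, hn, rfl⟩ := List.isRotated_iff_mod.1 h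
    exact ⟨u.take n, u.drop n, (List.take_append_drop n u).symm,
      List.rotate_eq_drop_append_take hn⟩

theorem length_rotations (w : List A) : (rotations w).length = w.length := by
  simp [rotations]

theorem mem_rotations {w r : List A} : r ∈ rotations w ↔ ∃ i < w.length, w.rotate i = r := by
  simp [rotations]

theorem length_of_mem_rotations {w r : List A} (h : r ∈ rotations w) : r.length = w.length := by
  obtain ⟨i, -, rfl⟩ := mem_rotations.1 h
  exact List.length_rotate w i

theorem rotations_eq_cyclicPermutations {w : List A} (hw : w ≠ []) :
    rotations w = w.cyclicPermutations := by
  refine List.ext_getElem (by simp [rotations, hw]) fun i _ _ => ?_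
  simp [rotations]

theorem rotations_rotate_perm (w : List A) (m : ℕ) :
    (rotations (w.rotate m)).Perm (rotations w) := by
  rcases eq_or_ne w [] with rfl | hw
  · simp
  rw [rotations_eq_cyclicPermutations hw, rotations_eq_cyclicPermutations (by simpa using hw),
    List.cyclicPermutations_rotate]
  exact List.rotate_perm _ _

theorem map_rotate_rotations (w : List A) (m : ℕ) :
    (rotations w).map (·.rotate m) = rotations (w.rotate m) := by
  simp only [rotations, List.length_rotate, List.map_map]
  refine List.map_congr_left fun i _ => ?_
  simp [List.rotate_rotate, Nat.add_comm]

theorem rotations_perm_of_isRotated {u v : List A} (h : u ~r v) :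
    (rotations u).Perm (rotations v) := by
  obtain ⟨m, rfl⟩ := h
  exact (rotations_rotate_perm u m).symm

theorem length_bwtBy (lt : A → A → Bool) (w : List A) : (bwtBy lt w).length = w.length := by
  rw [bwtBy, List.length_filterMap_eq_countP, List.countP_eq_length.2, List.length_mergeSort,
    length_rotations]
  intro r hr
  obtain ⟨i, hi, rfl⟩ := mem_rotations.1 (List.mem_mergeSort.1 hr)
  simpa [← List.length_pos_iff] using Nat.zero_lt_of_lt hi

theorem take_succ_rotate_length_sub_one {r : List A} {a : A} (ha : r.getLast? = some a) {k : ℕ}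
    (hk : k < r.length) : (r.rotate (r.length - 1)).take (k + 1) = a :: r.take k := by
  obtain ⟨t, rfl⟩ := List.getLast?_eq_some_iff.1 ha
  simp only [List.length_append, List.length_singleton, Nat.add_sub_cancel] at hk ⊢
  rw [List.rotate_append_length_eq, List.singleton_append, List.take_succ_cons,
    List.take_append_of_le_length (by omega)]

theorem zipWith_cons_filterMap_getLast? {l : List (List A)} {k : ℕ}
    (hl : ∀ r ∈ l, k < r.length) :
    List.zipWith List.cons (l.filterMap List.getLast?) (l.map (List.take k)) =
      l.map fun r => (r.rotate (r.length - 1)).take (k + 1) := by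
  induction l with
  | nil => rfl
  | cons r l ih =>
    obtain ⟨a, ha⟩ : ∃ a, r.getLast? = some a :=
      Option.isSome_iff_exists.1 (List.getLast?_isSome.2 (List.ne_nil_of_length_pos
        (Nat.zero_lt_of_lt (hl r List.mem_cons_self))))
    rw [List.forall_mem_cons] at hl
    simp [ha, ih hl.2, take_succ_rotate_length_sub_one ha hl.1]

section Matrix

variable [LinearOrder A]

def bwtMatrix (w : List A) : List (List A) := (rotations w).mergeSort (· ≤ ·)

theorem bwt_eq_filterMap_getLast? (w : List A) :
    bwt w = (bwtMatrix w).filterMap List.getLast? := by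
  rw [bwt, bwtBy, lexLe_stdLt]
  rfl

theorem bwtMatrix_perm (w : List A) : (bwtMatrix w).Perm (rotations w) :=
  List.mergeSort_perm _ _

theorem sortedLE_bwtMatrix (w : List A) : (bwtMatrix w).SortedLE :=
  List.sortedLE_mergeSort

theorem length_bwtMatrix (w : List A) : (bwtMatrix w).length = w.length := by
  rw [(bwtMatrix_perm w).length_eq, length_rotations]

theorem length_of_mem_bwtMatrix {w r : List A} (h : r ∈ bwtMatrix w) : r.length = w.length :=
  length_of_mem_rotations ((bwtMatrix_perm w).subset h)

theorem bwtMatrix_eq_of_isRotated {u v : List A} (h : u ~r v) : bwtMatrix u = bwtMatrix v :=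
  mergeSort_eq_of_perm_of_sortedLE ((rotations_perm_of_isRotated h).trans (bwtMatrix_perm v).symm)
    (sortedLE_bwtMatrix v)

theorem map_take_succ_bwtMatrix {w : List A} {k : ℕ} (hk : k < w.length) :
    (bwtMatrix w).map (List.take (k + 1)) =
      (List.zipWith List.cons (bwt w) ((bwtMatrix w).map (List.take k))).mergeSort (· ≤ ·) := by
  have hperm : ((bwtMatrix w).map (·.rotate (w.length - 1))).Perm (bwtMatrix w) :=
    calc ((bwtMatrix w).map (·.rotate (w.length - 1))).Perm
          ((rotations w).map (·.rotate (w.length - 1))) := (bwtMatrix_perm w).map _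
      _ = rotations (w.rotate (w.length - 1)) := map_rotate_rotations w _
      List.Perm _ (rotations w) := rotations_rotate_perm w _
      List.Perm _ (bwtMatrix w) := (bwtMatrix_perm w).symm
  rw [bwt_eq_filterMap_getLast?, zipWith_cons_filterMap_getLast? fun r hr =>
    (length_of_mem_bwtMatrix hr).symm ▸ hk]
  symm
  refine mergeSort_eq_of_perm_of_sortedLE ?_
    ((sortedLE_bwtMatrix w).pairwise.map _ fun _ _ h => monotone_take (k + 1) h).sortedLE
  rw [List.map_congr_left fun r hr => by rw [length_of_mem_bwtMatrix hr]]
  simpa only [List.map_map, Function.comp_def] using hperm.map (List.take (k + 1))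

theorem map_take_bwtMatrix_eq_of_bwt_eq {u v : List A} (h : bwt u = bwt v)
    (hlen : u.length = v.length) :
    ∀ k ≤ u.length, (bwtMatrix u).map (List.take k) = (bwtMatrix v).map (List.take k)
  | 0, _ => List.ext_getElem (by simp [length_bwtMatrix, hlen]) (by simp)
  | k + 1, hk => by
    rw [map_take_succ_bwtMatrix hk, map_take_succ_bwtMatrix (hlen ▸ hk), h,
      map_take_bwtMatrix_eq_of_bwt_eq h hlen k (by omega)]

theorem map_take_length_bwtMatrix (w : List A) :
    (bwtMatrix w).map (List.take w.length) = bwtMatrix w := by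
  conv_rhs => rw [← List.map_id (bwtMatrix w)]
  exact List.map_congr_left fun r hr => by rw [← length_of_mem_bwtMatrix hr, List.take_length, id]

theorem bwtMatrix_eq_of_bwt_eq {u v : List A} (h : bwt u = bwt v) : bwtMatrix u = bwtMatrix v := by
  have hlen : u.length = v.length := by
    rw [← length_bwtBy stdLt u, ← length_bwtBy stdLt v]
    exact congrArg List.length h
  rw [← map_take_length_bwtMatrix u, map_take_bwtMatrix_eq_of_bwt_eq h hlen _ le_rfl, hlen,
    map_take_length_bwtMatrix]

theorem isRotated_of_bwtMatrix_eq {u v : List A} (h : bwtMatrix u = bwtMatrix v) : u ~r v := by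
  rcases eq_or_ne u [] with rfl | hu
  · have hv : v.length = 0 := by simpa [length_bwtMatrix] using (congrArg List.length h).symm
    rw [List.length_eq_zero_iff.1 hv]
  · have hmem : u ∈ rotations v := by
      rw [← (bwtMatrix_perm v).mem_iff, ← h, (bwtMatrix_perm u).mem_iff, mem_rotations]
      exact ⟨0, List.length_pos_iff.2 hu, List.rotate_zero u⟩
    obtain ⟨i, -, hi⟩ := mem_rotations.1 hmem
    exact List.IsRotated.symm ⟨i, hi⟩

end Matrix

/-- Two words over the same ordered alphabet are conjugate iff their BWTs are equal. -/
theorem conjugate_iff_bwt_eq [LinearOrder A] (u v : List A) :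
    Conjugate u v ↔ bwt u = bwt v := by
  rw [conjugate_iff_isRotated]
  refine ⟨fun h => ?_, fun h => isRotated_of_bwtMatrix_eq (bwtMatrix_eq_of_bwt_eq h)⟩
  rw [bwt_eq_filterMap_getLast?, bwt_eq_filterMap_getLast?, bwtMatrix_eq_of_isRotated h]

end BWTpaper
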